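/- For every real c with c² < 1, ∫_{−π/2}^{π/2} 1/(1 + c·cos x)² dx = (4/(1−c²)^{3/2})·arctan(√((1−c)/(1+c))) − 2c/(1−c²). -/

import Mathlib

/-! The half-angle substitution `u = tan (x / 2)` makes the integrand rational in `u` and yields
an elementary antiderivative on `(-π, π)`; the value then follows from the fundamental theorem of
calculus, since `tan (±π / 4) = ±1`. -/

open Real

theorem rpow_three_halves {a : ℝ} (ha : 0 ≤ a) : a ^ ((3 : ℝ) / 2) = a * √a := by
  rw [show (3 : ℝ) / 2 = 1 + 1 / 2 by norm_num, rpow_add' ha (by norm_num), rpow_one,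
    sqrt_eq_rpow]

theorem one_add_mul_cos_pos {c : ℝ} (hc : |c| < 1) (x : ℝ) : 0 < 1 + c * cos x := by
  have : |c * cos x| < 1 := by
    rw [abs_mul]
    exact (mul_le_of_le_one_right (abs_nonneg c) (abs_cos_le_one x)).trans_lt hc
  linarith [neg_abs_le (c * cos x)]

theorem hasDerivAt_arctan_mul_tan_half (t : ℝ) {x : ℝ} (hx : cos (x / 2) ≠ 0) :
    HasDerivAt (fun y => arctan (t * tan (y / 2)))
      (t / (1 + t ^ 2 + (1 - t ^ 2) * cos x)) x := by
  have htan : HasDerivAt (fun y => tan (y / 2)) (1 / cos (x / 2) ^ 2 * (1 / 2)) x :=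
    (hasDerivAt_tan hx).comp (h := fun y => y / 2) x ((hasDerivAt_id x).div_const 2)
  convert (htan.const_mul t).arctan using 1
  have hden : 1 + t ^ 2 + (1 - t ^ 2) * cos x
      = 2 * cos (x / 2) ^ 2 * (1 + (t * tan (x / 2)) ^ 2) := by
    have hcos : cos x = 2 * cos (x / 2) ^ 2 - 1 := by
      rw [← cos_two_mul, mul_div_cancel₀ x two_ne_zero]
    rw [hcos, tan_eq_sin_div_cos]
    field_simp
    linear_combination (-2 * t ^ 2) * sin_sq_add_cos_sq (x / 2)
  rw [hden]
  field_simp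

theorem hasDerivAt_sin_div_one_add_mul_cos (c : ℝ) {x : ℝ} (hx : 1 + c * cos x ≠ 0) :
    HasDerivAt (fun y => sin y / (1 + c * cos y)) ((c + cos x) / (1 + c * cos x) ^ 2) x := by
  have hden : HasDerivAt (fun y => 1 + c * cos y) (c * -sin x) x :=
    ((hasDerivAt_cos x).const_mul c).const_add 1
  refine ((hasDerivAt_sin x).div hden hx).congr_deriv ?_
  congr 1
  linear_combination c * sin_sq_add_cos_sq x

noncomputable def antiderivInvOneAddMulCosSq (c x : ℝ) : ℝ :=
  (2 / √(1 - c ^ 2) * arctan (√((1 - c) / (1 + c)) * tan (x / 2))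
    - c * (sin x / (1 + c * cos x))) / (1 - c ^ 2)

theorem hasDerivAt_antiderivInvOneAddMulCosSq {c : ℝ} (hc : |c| < 1) {x : ℝ}
    (hx : cos (x / 2) ≠ 0) :
    HasDerivAt (antiderivInvOneAddMulCosSq c) (1 / (1 + c * cos x) ^ 2) x := by
  obtain ⟨hc₁, hc₂⟩ := abs_lt.1 hc
  have hpos : 0 < 1 - c ^ 2 := by nlinarith
  have hD := one_add_mul_cos_pos hc x
  have hc₀ : 0 < 1 + c := by linarith
  have hts : √((1 - c) / (1 + c)) * (1 + c) = √(1 - c ^ 2) := by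
    rw [show 1 - c ^ 2 = (1 - c) / (1 + c) * (1 + c) ^ 2 by field_simp; ring,
      sqrt_mul (div_nonneg (by linarith) hc₀.le), sqrt_sq hc₀.le]
  set t := √((1 - c) / (1 + c))
  set s := √(1 - c ^ 2)
  have hs : 0 < s := sqrt_pos.2 hpos
  have ht : t ^ 2 = (1 - c) / (1 + c) := sq_sqrt (div_nonneg (by linarith) hc₀.le)
  have hden : 1 + t ^ 2 + (1 - t ^ 2) * cos x = 2 * (1 + c * cos x) / (1 + c) := by
    rw [ht]
    field_simp
    ring
  have hF := (((hasDerivAt_arctan_mul_tan_half t hx).const_mul (2 / s)).sub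
    ((hasDerivAt_sin_div_one_add_mul_cos c hD.ne').const_mul c)).div_const (1 - c ^ 2)
  refine hF.congr_deriv ?_
  rw [hden, div_div_eq_mul_div, hts]
  field_simp
  ring

theorem antiderivInvOneAddMulCosSq_sub (c : ℝ) :
    antiderivInvOneAddMulCosSq c (π / 2) - antiderivInvOneAddMulCosSq c (-(π / 2)) =
      (4 / √(1 - c ^ 2) * arctan √((1 - c) / (1 + c)) - 2 * c) / (1 - c ^ 2) := by
  have htan : tan (π / 2 / 2) = 1 := by rw [div_div, ← tan_pi_div_four]; norm_num
  simp only [antiderivInvOneAddMulCosSq, neg_div, tan_neg, htan, sin_neg, cos_neg,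
    sin_pi_div_two, cos_pi_div_two, mul_neg, mul_one, arctan_neg]
  ring

theorem integral_one_div_one_add_cos_sq (c : ℝ) (hc : c ^ 2 < 1) :
    ∫ x in (-(Real.pi / 2))..(Real.pi / 2), 1 / (1 + c * Real.cos x) ^ 2 =
      (4 / (1 - c ^ 2) ^ ((3 : ℝ) / 2)) * Real.arctan (Real.sqrt ((1 - c) / (1 + c))) -
        2 * c / (1 - c ^ 2) := by
  have hc' : |c| < 1 := (sq_lt_one_iff_abs_lt_one c).1 hc
  have hderiv : ∀ x ∈ Set.uIcc (-(π / 2)) (π / 2),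
      HasDerivAt (antiderivInvOneAddMulCosSq c) (1 / (1 + c * cos x) ^ 2) x := by
    intro x hx
    rw [Set.uIcc_of_le (by linarith [pi_pos])] at hx
    refine hasDerivAt_antiderivInvOneAddMulCosSq hc' (cos_pos_of_mem_Ioo ⟨?_, ?_⟩).ne' <;>
      linarith [hx.1, hx.2, pi_pos]
  have hint : IntervalIntegrable (fun x => 1 / (1 + c * cos x) ^ 2) MeasureTheory.volume
      (-(π / 2)) (π / 2) :=
    (continuous_const.div (by fun_prop)
      fun x => (pow_pos (one_add_mul_cos_pos hc' x) 2).ne').intervalIntegrable _ _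
  have hpos : 0 < 1 - c ^ 2 := by linarith
  rw [intervalIntegral.integral_eq_sub_of_hasDerivAt hderiv hint, antiderivInvOneAddMulCosSq_sub,
    rpow_three_halves hpos.le]
  have hs : 0 < √(1 - c ^ 2) := sqrt_pos.2 hpos
  field_simp
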